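/- arXiv:1102.2048 — 2 statements merged into one kernel-verified Lean document; each statement's English description precedes it below -/
import Mathlib

section
/- First Self-Reference Theorem (SRT1): Let C be a category equipped with a distinguished endomorphism ♯X : X ⟶ X for each object X, and let Ref be a relation on (not necessarily parallel) morphisms of C satisfying the Indicative Shift: whenever Ref a b holds and the composite b ∘ a is defined (say a : W ⟶ X and b : X ⟶ Z), then Ref (♯X ∘ a) (b ∘ a) also holds. Let F : X ⟶ Y be any morphism of C and suppose g : W ⟶ X is a morphism with Ref g (F ∘ ♯X). Then there exists a morphism h : W ⟶ X of C, namely h = ♯X ∘ g, such that Ref h (F ∘ h). -/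
open CategoryTheory

/-- **First Self-Reference Theorem (SRT1).**
`C` is a category with a distinguished endomorphism `sharp X : X ⟶ X` for each object `X`,
and `Ref` is a relation on (not necessarily parallel) morphisms of `C` satisfying the
Indicative Shift: if `Ref a b` holds and `b ∘ a` is defined (`a : W ⟶ X`, `b : X ⟶ Z`),
then `Ref (♯X ∘ a) (b ∘ a)` holds (in Lean's composition order, `Ref (a ≫ sharp X) (a ≫ b)`).
Given any `F : X ⟶ Y` and `g : W ⟶ X` with `Ref g (F ∘ ♯X)`, there exists `h : W ⟶ X`,
namely `h = ♯X ∘ g`, with `Ref h (F ∘ h)`. -/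
theorem first_self_reference_theorem
    {C : Type*} [Category C]
    (sharp : ∀ X : C, X ⟶ X)
    (Ref : ∀ {W X Y Z : C}, (W ⟶ X) → (Y ⟶ Z) → Prop)
    (indicative_shift : ∀ {W X Z : C} (a : W ⟶ X) (b : X ⟶ Z),
      Ref a b → Ref (a ≫ sharp X) (a ≫ b))
    {W X Y : C} (F : X ⟶ Y) (g : W ⟶ X)
    (hg : Ref g (sharp X ≫ F)) :
    ∃ h : W ⟶ X, h = g ≫ sharp X ∧ Ref h (h ≫ F) := by
  refine ⟨g ≫ sharp X, rfl, ?_⟩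
  rw [Category.assoc]
  exact indicative_shift g (sharp X ≫ F) hg
end

section
/- Fixed-point corollary of SRT1: Let C be a category equipped with a distinguished endomorphism ♯X : X ⟶ X for each object X, and let Ref be a relation on morphisms of C satisfying the Indicative Shift (if Ref a b holds and b ∘ a is defined, with a : W ⟶ X, then Ref (♯X ∘ a) (b ∘ a) holds). Suppose moreover that Ref m m holds for every morphism m of C (identity references). Then for every endomorphism F : X ⟶ X of C there exists a morphism a : X ⟶ X, namely a = ♯X ∘ F ∘ ♯X, such that Ref a (F ∘ a). -/
open CategoryTheory

theorem ref_comp_sharp_of_self_comp_self {C : Type*} [Category C]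
    (sharp : ∀ X : C, X ⟶ X)
    (Ref : ∀ {W X Y Z : C}, (W ⟶ X) → (Y ⟶ Z) → Prop)
    (indicative_shift : ∀ {W X Z : C} (a : W ⟶ X) (b : X ⟶ Z),
      Ref a b → Ref (a ≫ sharp X) (a ≫ b))
    (ref_refl : ∀ {W X : C} (m : W ⟶ X), Ref m m)
    {X : C} (g : X ⟶ X) : Ref (g ≫ sharp X) (g ≫ g) :=
  indicative_shift g g (ref_refl g)

/-- **Fixed-point corollary of SRT1.**
`C` is a category with distinguished endomorphisms `sharp X : X ⟶ X`, and `Ref` is a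
relation on morphisms satisfying the Indicative Shift (if `Ref a b` with `a : W ⟶ X`,
`b : X ⟶ Z`, then `Ref (♯X ∘ a) (b ∘ a)`, i.e. `Ref (a ≫ sharp X) (a ≫ b)`), and which is
reflexive (`Ref m m` for every morphism `m`). Then every endomorphism `F : X ⟶ X` admits a
morphism `a = ♯X ∘ F ∘ ♯X` with `Ref a (F ∘ a)`. -/
theorem fixed_point_corollary_of_SRT1
    {C : Type*} [Category C]
    (sharp : ∀ X : C, X ⟶ X)
    (Ref : ∀ {W X Y Z : C}, (W ⟶ X) → (Y ⟶ Z) → Prop)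
    (indicative_shift : ∀ {W X Z : C} (a : W ⟶ X) (b : X ⟶ Z),
      Ref a b → Ref (a ≫ sharp X) (a ≫ b))
    (ref_refl : ∀ {W X : C} (m : W ⟶ X), Ref m m)
    {X : C} (F : X ⟶ X) :
    ∃ a : X ⟶ X, a = sharp X ≫ F ≫ sharp X ∧ Ref a (a ≫ F) := by
  refine ⟨sharp X ≫ F ≫ sharp X, rfl, ?_⟩
  -- Diagonal trick: for `g = sharp X ≫ F` the fixed point is `g ≫ sharp X`,
  -- and `g ≫ g` is its image under `F`.
  simpa only [Category.assoc] using
    ref_comp_sharp_of_self_comp_self sharp Ref indicative_shift ref_refl (sharp X ≫ F)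
end
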